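/- Let n ≥ 1 and let L : ℝⁿ → ℝ be three times continuously differentiable. Fix w ∈ ℝⁿ with (∂L/∂wᵢ)(w) · |wᵢ| = 0 for every i, and define the symmetric matrix H̃ by H̃ᵢⱼ = (∂²L/∂wᵢ∂wⱼ)(w) · |wᵢ| · |wⱼ|, i.e., H̃ = ∇²L(w) ⊙ (|w||w|ᵀ). If the largest eigenvalue λ_max(H̃) is nonnegative, then lim_{ρ → 0⁺} (2/ρ²) · sup { L(w + γ ⊙ |w|) − L(w) : ‖γ‖₂ ≤ ρ } = λ_max(H̃). -/

import Mathlib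

/-!
By Taylor's formula, `L (w + γ ⊙ |w|) - L w = ½ γᵀ H̃ γ + o(‖γ‖²)`: the first-order term vanishes
because the rescaled gradient does, and `H̃` is the Hessian of `γ ↦ L (w + γ ⊙ |w|)` at `0`.
For `λ = λ_max(H̃) ≥ 0` the maximum of `½ γᵀ H̃ γ` over the ball of radius `ρ` is `½ λ ρ²`
(a near-maximiser of the Rayleigh quotient, rescaled to the sphere, almost attains it), so the
maximum of `L (w + γ ⊙ |w|) - L w` over that ball is `½ λ ρ² + o(ρ²)`.
-/

open Filter Asymptotics Topology Metric Set

section Taylor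

variable {E F G : Type*} [NormedAddCommGroup E] [NormedSpace ℝ E] [NormedAddCommGroup F]
  [NormedSpace ℝ F] [NormedAddCommGroup G] [NormedSpace ℝ G]

theorem hasFDerivAt_half_apply_self {B : F →L[ℝ] F →L[ℝ] G} (hB : ∀ u v, B u v = B v u) (h : F) :
    HasFDerivAt (fun k => (2⁻¹ : ℝ) • B k k) (B h) h := by
  refine ((B.hasFDerivAt.clm_apply (hasFDerivAt_id h)).const_smul (2⁻¹ : ℝ)).congr_fderiv ?_
  ext k
  simp [hB k h]
  module

theorem ContDiff.isLittleO_second_order_taylor {g : F → G} (hg : ContDiff ℝ 2 g) (x : F) :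
    (fun h => g (x + h) - g x - fderiv ℝ g x h - (2⁻¹ : ℝ) • fderiv ℝ (fderiv ℝ g) x h h)
      =o[𝓝 0] fun h => ‖h‖ ^ 2 := by
  set B := fderiv ℝ (fderiv ℝ g) x
  have hB : ∀ u v, B u v = B v u :=
    hg.contDiffAt.isSymmSndFDerivAt (by simp [minSmoothness_of_isRCLikeNormedField])
  have hg2 : Differentiable ℝ (fderiv ℝ g) :=
    (hg.fderiv_right (m := 1) le_rfl).differentiable one_ne_zero
  have hderiv : ∀ h, HasFDerivAt
      (fun h => g (x + h) - g x - fderiv ℝ g x h - (2⁻¹ : ℝ) • B h h)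
      (fderiv ℝ g (x + h) - fderiv ℝ g x - B h) h := fun h =>
    ((((hasFDerivAt_comp_add_left x).2 (hg.differentiable two_ne_zero _).hasFDerivAt).sub_const
      _).sub (fderiv ℝ g x).hasFDerivAt).sub (hasFDerivAt_half_apply_self hB h)
  have hsmall : (fun h => fderiv ℝ g (x + h) - fderiv ℝ g x - B h)
      =o[𝓝 0] fun h => ‖h - 0‖ ^ 1 := by
    simpa using (hasFDerivAt_iff_isLittleO_nhds_zero.1 (hg2 x).hasFDerivAt).norm_right
  simpa using convex_univ.isLittleO_pow_succ (mem_univ 0)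
    (fun h _ => (hderiv h).hasFDerivWithinAt) (by simpa using hsmall)

theorem ContDiff.isLittleO_comp_add_sub_half_bilinearComp {g : F → ℝ} (hg : ContDiff ℝ 2 g)
    {x : F} {A : E →L[ℝ] F} (hA : (fderiv ℝ g x).comp A = 0) :
    (fun v => g (x + A v) - g x - (fderiv ℝ (fderiv ℝ g) x).bilinearComp A A v v / 2)
      =o[𝓝 0] fun v => ‖v‖ ^ 2 := by
  have hA0 : Tendsto A (𝓝 0) (𝓝 0) := by simpa using A.continuous.tendsto 0
  have hbig : (fun v => ‖A v‖ ^ 2) =O[𝓝 0] fun v => ‖v‖ ^ 2 :=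
    (A.isBigO_id _).norm_norm.pow 2
  refine (((hg.isLittleO_second_order_taylor x).comp_tendsto hA0).trans_isBigO hbig).congr_left
    fun v => ?_
  have hv : fderiv ℝ g x (A v) = 0 := by simpa using congr($hA v)
  simp [hv]
  ring

theorem fderiv_clm_apply_const_apply {c : E → F →L[ℝ] G} {x : E} (hc : DifferentiableAt ℝ c x)
    (u : E) (v : F) : fderiv ℝ (fun y => c y v) x u = fderiv ℝ c x u v := by
  rw [fderiv_clm_apply hc (differentiableAt_const v)]
  simp

end Taylor

section Rayleigh

variable {E : Type*} [NormedAddCommGroup E] [NormedSpace ℝ E] (C : E →L[ℝ] E →L[ℝ] ℝ)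

-- For trivial `E` the set is empty and this is the junk value `sSup ∅ = 0`.
noncomputable def rayleighSup : ℝ := sSup ((fun v => C v v / ‖v‖ ^ 2) '' {0}ᶜ)

theorem bddAbove_rayleigh : BddAbove ((fun v => C v v / ‖v‖ ^ 2) '' {0}ᶜ) := by
  refine ⟨‖C‖, forall_mem_image.2 fun v _ => div_le_of_le_mul₀ (by positivity) (norm_nonneg C) ?_⟩
  have := C.le_opNorm₂ v v
  rw [Real.norm_eq_abs] at this
  nlinarith [le_abs_self (C v v)]

theorem apply_self_le_rayleighSup_mul (v : E) : C v v ≤ rayleighSup C * ‖v‖ ^ 2 := by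
  rcases eq_or_ne v 0 with rfl | hv
  · simp
  · exact (div_le_iff₀ (by positivity)).1 (le_csSup (bddAbove_rayleigh C) (mem_image_of_mem _ hv))

theorem exists_norm_le_mul_lt_apply_self {c : ℝ} (hc : c < rayleighSup C) {ρ : ℝ} (hρ : 0 < ρ) :
    ∃ v : E, ‖v‖ ≤ ρ ∧ c * ρ ^ 2 < C v v := by
  rcases ((fun v => C v v / ‖v‖ ^ 2) '' {0}ᶜ).eq_empty_or_nonempty with hS | hS
  · rw [rayleighSup, hS, Real.sSup_empty] at hc
    exact ⟨0, by simpa using hρ.le, by simpa using mul_neg_of_neg_of_pos hc (by positivity)⟩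
  · obtain ⟨_, ⟨u, hu, rfl⟩, hcu⟩ := exists_lt_of_lt_csSup hS hc
    have hu : 0 < ‖u‖ := norm_pos_iff.2 hu
    refine ⟨(ρ / ‖u‖) • u, by simp [norm_smul, abs_of_pos hρ, hu.ne'], ?_⟩
    calc c * ρ ^ 2 < C u u / ‖u‖ ^ 2 * ρ ^ 2 := by gcongr
      _ = C ((ρ / ‖u‖) • u) ((ρ / ‖u‖) • u) := by
        simp only [map_smul, smul_apply, smul_eq_mul]
        field_simp

variable {C} {f : E → ℝ} {ρ ε : ℝ}

theorem mem_upperBounds_image_closedBall (hC : 0 ≤ rayleighSup C) (hε : 0 ≤ ε)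
    (hf : ∀ v ∈ closedBall 0 ρ, |f v - C v v / 2| ≤ ε * ‖v‖ ^ 2) :
    (rayleighSup C / 2 + ε) * ρ ^ 2 ∈ upperBounds (f '' closedBall 0 ρ) := by
  refine forall_mem_image.2 fun v hv => ?_
  have hvρ : ‖v‖ ^ 2 ≤ ρ ^ 2 := by gcongr; simpa using hv
  have := apply_self_le_rayleighSup_mul C v
  have := (abs_le.1 (hf v hv)).2
  nlinarith

theorem le_sSup_image_closedBall (hε : 0 ≤ ε) (hρ : 0 < ρ)
    (hbdd : BddAbove (f '' closedBall 0 ρ))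
    (hf : ∀ v ∈ closedBall 0 ρ, |f v - C v v / 2| ≤ ε * ‖v‖ ^ 2) :
    (rayleighSup C / 2 - ε) * ρ ^ 2 ≤ sSup (f '' closedBall 0 ρ) := by
  refine le_of_forall_lt fun c hc => ?_
  have hc' : 2 * (c / ρ ^ 2 + ε) < rayleighSup C := by
    linarith [(div_lt_iff₀ (by positivity)).2 hc]
  obtain ⟨v, hvρ, hv⟩ := exists_norm_le_mul_lt_apply_self C hc' hρ
  have hv_mem : v ∈ closedBall 0 ρ := by simpa using hvρ
  have hvρ2 : ‖v‖ ^ 2 ≤ ρ ^ 2 := by gcongr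
  have hfv := (abs_le.1 (hf v hv_mem)).1
  have hc_eq : 2 * (c / ρ ^ 2 + ε) * ρ ^ 2 = 2 * c + 2 * ε * ρ ^ 2 := by field_simp
  refine lt_of_lt_of_le ?_ (le_csSup hbdd (mem_image_of_mem f hv_mem))
  nlinarith

theorem abs_two_div_sq_mul_sSup_image_closedBall_sub_le (hC : 0 ≤ rayleighSup C) (hε : 0 ≤ ε)
    (hρ : 0 < ρ) (hf : ∀ v ∈ closedBall 0 ρ, |f v - C v v / 2| ≤ ε * ‖v‖ ^ 2) :
    |2 / ρ ^ 2 * sSup (f '' closedBall 0 ρ) - rayleighSup C| ≤ 2 * ε := by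
  have hub := mem_upperBounds_image_closedBall hC hε hf
  have hle := csSup_le ((nonempty_closedBall.2 hρ.le).image f) hub
  have hge := le_sSup_image_closedBall hε hρ ⟨_, hub⟩ hf
  rw [abs_sub_le_iff, div_mul_eq_mul_div, div_sub' (by positivity), sub_div' (by positivity),
    div_le_iff₀ (by positivity), div_le_iff₀ (by positivity)]
  constructor <;> nlinarith

theorem tendsto_two_div_sq_mul_sSup_image_closedBall (hC : 0 ≤ rayleighSup C)
    (hf : (fun v => f v - C v v / 2) =o[𝓝 0] fun v => ‖v‖ ^ 2) :
    Tendsto (fun ρ => 2 / ρ ^ 2 * sSup (f '' closedBall 0 ρ)) (𝓝[>] 0) (𝓝 (rayleighSup C)) := by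
  rw [Metric.tendsto_nhds]
  intro ε hε
  obtain ⟨δ, hδ, hball⟩ := Metric.eventually_nhds_iff.1 (hf.def (by positivity : (0 : ℝ) < ε / 4))
  filter_upwards [Ioo_mem_nhdsGT hδ] with ρ ⟨hρ, hρδ⟩
  have hbound : ∀ v ∈ closedBall 0 ρ, |f v - C v v / 2| ≤ ε / 4 * ‖v‖ ^ 2 := fun v hv => by
    simpa using hball (lt_of_le_of_lt (mem_closedBall.1 hv) hρδ)
  rw [Real.dist_eq]
  linarith [abs_two_div_sq_mul_sSup_image_closedBall_sub_le hC (by positivity) hρ hbound]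

end Rayleigh

section Coordinates

variable {ι : Type*}

noncomputable def adaptiveScaling (w : ι → ℝ) : EuclideanSpace ℝ ι →L[ℝ] ι → ℝ :=
  ContinuousLinearMap.pi fun i => |w i| • EuclideanSpace.proj i

@[simp]
theorem adaptiveScaling_toLp (w γ : ι → ℝ) :
    adaptiveScaling w (WithLp.toLp 2 γ) = fun i => γ i * |w i| := by
  ext i
  simp [adaptiveScaling, mul_comm]

variable [Fintype ι]

theorem setOf_adaptive_perturbation_eq_image (L : (ι → ℝ) → ℝ) (w : ι → ℝ) (ρ : ℝ) :
    {s : ℝ | ∃ γ : ι → ℝ, ‖(WithLp.equiv 2 (ι → ℝ)).symm γ‖ ≤ ρ ∧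
        s = L (w + fun i => γ i * |w i|) - L w}
      = (fun v => L (w + adaptiveScaling w v) - L w) '' closedBall 0 ρ := by
  ext s
  rw [mem_image, (WithLp.toLp_surjective 2).exists]
  simp [eq_comm]

variable [DecidableEq ι]

theorem ContinuousLinearMap.apply_eq_sum_mul_single (f : (ι → ℝ) →L[ℝ] ℝ) (a : ι → ℝ) :
    f a = ∑ i, a i * f (Pi.single i 1) := by
  conv_lhs => rw [← Finset.univ_sum_single a]
  rw [map_sum]
  refine Finset.sum_congr rfl fun i _ => ?_
  rw [← smul_eq_mul, ← map_smul, ← Pi.single_smul', smul_eq_mul, mul_one]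

theorem ContinuousLinearMap.apply_apply_eq_sum_sum_single (B : (ι → ℝ) →L[ℝ] (ι → ℝ) →L[ℝ] ℝ)
    (a b : ι → ℝ) : B a b = ∑ i, ∑ j, a i * B (Pi.single i 1) (Pi.single j 1) * b j := by
  rw [(B a).apply_eq_sum_mul_single, Finset.sum_comm]
  refine Finset.sum_congr rfl fun j _ => ?_
  rw [← B.flip_apply, (B.flip _).apply_eq_sum_mul_single, Finset.mul_sum]
  exact Finset.sum_congr rfl fun i _ => by simp only [B.flip_apply]; ring

theorem comp_adaptiveScaling_eq_zero {f : (ι → ℝ) →L[ℝ] ℝ} {w : ι → ℝ}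
    (hf : ∀ i, f (Pi.single i 1) * |w i| = 0) : f.comp (adaptiveScaling w) = 0 := by
  ext1 v
  obtain ⟨γ, rfl⟩ := WithLp.toLp_surjective 2 v
  rw [ContinuousLinearMap.comp_apply, adaptiveScaling_toLp, f.apply_eq_sum_mul_single]
  exact Finset.sum_eq_zero fun i _ => by rw [mul_assoc, mul_comm |w i|, hf, mul_zero]

theorem bilinearComp_adaptiveScaling_apply_toLp (B : (ι → ℝ) →L[ℝ] (ι → ℝ) →L[ℝ] ℝ)
    (w γ : ι → ℝ) :
    B.bilinearComp (adaptiveScaling w) (adaptiveScaling w) (WithLp.toLp 2 γ) (WithLp.toLp 2 γ)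
      = ∑ i, ∑ j, γ i * (B (Pi.single i 1) (Pi.single j 1) * (|w i| * |w j|)) * γ j := by
  rw [ContinuousLinearMap.bilinearComp_apply, B.apply_apply_eq_sum_sum_single]
  simp only [adaptiveScaling_toLp]
  exact Finset.sum_congr rfl fun i _ => Finset.sum_congr rfl fun j _ => by ring

theorem sSup_setOf_hessian_rayleigh {L : (ι → ℝ) → ℝ} {w : ι → ℝ}
    (hL : DifferentiableAt ℝ (fderiv ℝ L) w) :
    sSup {r : ℝ | ∃ γ : ι → ℝ, γ ≠ 0 ∧
        r = (∑ i, ∑ j, γ i *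
              (fderiv ℝ (fun x => fderiv ℝ L x (Pi.single j 1)) w (Pi.single i 1)
                * (|w i| * |w j|)) * γ j)
            / ‖(WithLp.equiv 2 (ι → ℝ)).symm γ‖ ^ 2}
      = rayleighSup ((fderiv ℝ (fderiv ℝ L) w).bilinearComp (adaptiveScaling w)
          (adaptiveScaling w)) := by
  congr 1
  ext r
  rw [mem_image, (WithLp.toLp_surjective 2).exists]
  simp only [mem_ofPred_eq, fderiv_clm_apply_const_apply hL,
    ← bilinearComp_adaptiveScaling_apply_toLp, WithLp.equiv_symm_apply, mem_compl_singleton_iff,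
    ne_eq, WithLp.toLp_eq_zero, eq_comm]

end Coordinates

theorem worst_case_adaptive_sharpness_l2_lambda_max_general
    (n : ℕ) (L : (Fin n → ℝ) → ℝ) (hL : ContDiff ℝ 3 L)
    (w : Fin n → ℝ)
    (hcrit : ∀ i, fderiv ℝ L w (Pi.single i 1) * |w i| = 0)
    (hlam : 0 ≤ sSup {r : ℝ | ∃ γ : Fin n → ℝ, γ ≠ 0 ∧
        r = (∑ i, ∑ j, γ i *
              (fderiv ℝ (fun x => fderiv ℝ L x (Pi.single j 1)) w (Pi.single i 1)
                * (|w i| * |w j|)) * γ j)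
            / ‖(WithLp.equiv 2 (Fin n → ℝ)).symm γ‖ ^ 2}) :
    Tendsto (fun ρ : ℝ => (2 / ρ ^ 2) *
        sSup {s : ℝ | ∃ γ : Fin n → ℝ,
          ‖(WithLp.equiv 2 (Fin n → ℝ)).symm γ‖ ≤ ρ ∧
          s = L (w + fun i => γ i * |w i|) - L w})
      (nhdsWithin 0 (Set.Ioi 0))
      (nhds (sSup {r : ℝ | ∃ γ : Fin n → ℝ, γ ≠ 0 ∧
        r = (∑ i, ∑ j, γ i *
              (fderiv ℝ (fun x => fderiv ℝ L x (Pi.single j 1)) w (Pi.single i 1)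
                * (|w i| * |w j|)) * γ j)
            / ‖(WithLp.equiv 2 (Fin n → ℝ)).symm γ‖ ^ 2})) := by
  have hL2 : ContDiff ℝ 2 L := hL.of_le (by norm_num)
  have hHess : DifferentiableAt ℝ (fderiv ℝ L) w :=
    (hL2.fderiv_right (m := 1) le_rfl).differentiable one_ne_zero w
  rw [sSup_setOf_hessian_rayleigh hHess] at hlam ⊢
  simp_rw [setOf_adaptive_perturbation_eq_image]
  exact tendsto_two_div_sq_mul_sSup_image_closedBall hlam
    (hL2.isLittleO_comp_add_sub_half_bilinearComp (comp_adaptiveScaling_eq_zero hcrit))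

/-- For the ℓ₂ ball, the worst-case elementwise adaptive sharpness at a critical point of the
rescaled gradient satisfies
`lim_{ρ→0⁺} (2/ρ²) max_{‖γ‖₂ ≤ ρ} (L(w + γ ⊙ |w|) − L(w)) = λ_max(∇²L(w) ⊙ |w||w|ᵀ)`
whenever that largest eigenvalue (the sup of the Rayleigh quotient) is nonnegative. -/
theorem worst_case_adaptive_sharpness_l2_lambda_max
    (n : ℕ) (hn : 1 ≤ n) (L : (Fin n → ℝ) → ℝ) (hL : ContDiff ℝ 3 L)
    (w : Fin n → ℝ)
    (hcrit : ∀ i, fderiv ℝ L w (Pi.single i 1) * |w i| = 0)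
    (hlam : 0 ≤ sSup {r : ℝ | ∃ γ : Fin n → ℝ, γ ≠ 0 ∧
        r = (∑ i, ∑ j, γ i *
              (fderiv ℝ (fun x => fderiv ℝ L x (Pi.single j 1)) w (Pi.single i 1)
                * (|w i| * |w j|)) * γ j)
            / ‖(WithLp.equiv 2 (Fin n → ℝ)).symm γ‖ ^ 2}) :
    Tendsto (fun ρ : ℝ => (2 / ρ ^ 2) *
        sSup {s : ℝ | ∃ γ : Fin n → ℝ,
          ‖(WithLp.equiv 2 (Fin n → ℝ)).symm γ‖ ≤ ρ ∧
          s = L (w + fun i => γ i * |w i|) - L w})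
      (nhdsWithin 0 (Set.Ioi 0))
      (nhds (sSup {r : ℝ | ∃ γ : Fin n → ℝ, γ ≠ 0 ∧
        r = (∑ i, ∑ j, γ i *
              (fderiv ℝ (fun x => fderiv ℝ L x (Pi.single j 1)) w (Pi.single i 1)
                * (|w i| * |w j|)) * γ j)
            / ‖(WithLp.equiv 2 (Fin n → ℝ)).symm γ‖ ^ 2})) :=
  worst_case_adaptive_sharpness_l2_lambda_max_general n L hL w hcrit hlam
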